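/- For every integer i ≥ 5 and every integer g with g > 4i + 12, the weighted-degree-i component Q(g)_i is one-dimensional over ℚ, spanned by the (nonzero) image of the monomial a₂′^i. -/

import Mathlib

open MvPolynomial

noncomputable section

/-- The polynomial ring `ℚ[a₁, a₂′, a₃′]`. -/
abbrev R3 : Type := MvPolynomial (Fin 3) ℚ

/-- Weights: `a₁` and `a₂′` have weight 1, `a₃′` has weight 2. -/
def wt : Fin 3 → ℕ := ![1, 1, 2]

def a1 : R3 := X 0
def a2' : R3 := X 1
def a3' : R3 := X 2

/-- The relation `r₁`. -/
def r1 (g : ℤ) : R3 :=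
  C (2*(g:ℚ)^3 + 9*(g:ℚ)^2 + 10*(g:ℚ)) * a1^3
    - C (8*(g:ℚ)^2 + 24*(g:ℚ) + 8) * (a1 * a3')

/-- The relation `r₂`. -/
def r2 (g : ℤ) : R3 :=
  C (12*(g:ℚ)^3 + 42*(g:ℚ)^2 + 36*(g:ℚ)) * (a1^2 * a2')
    - C (22*(g:ℚ)^3 + 121*(g:ℚ)^2 + 187*(g:ℚ) + 66) * (a1 * a3')
    - C (24*(g:ℚ)^2 + 24*(g:ℚ)) * (a2' * a3')

/-- The relation `r₃`. -/
def r3 (g : ℤ) : R3 :=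
  C (432*(g:ℚ)^3 + 1512*(g:ℚ)^2 + 1296*(g:ℚ)) * (a1 * a2'^2)
    - C (1450*(g:ℚ)^3 + 8001*(g:ℚ)^2 + 13115*(g:ℚ) + 5442) * (a1 * a3')
    - C (1584*(g:ℚ)^3 + 5544*(g:ℚ)^2 + 3936*(g:ℚ)) * (a2' * a3')

/-- The relation `r₄`. -/
def r4 (g : ℤ) : R3 :=
  C (14344*(g:ℚ)^6 + 165692*(g:ℚ)^5 + 747682*(g:ℚ)^4 + 1636869*(g:ℚ)^3
      + 1719009*(g:ℚ)^2 + 677844*(g:ℚ) - 540) * (a1^2 * a3')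
    - C (17280*(g:ℚ)^4 + 112320*(g:ℚ)^3 + 224640*(g:ℚ)^2 + 129600*(g:ℚ)) * (a2'^2 * a3')
    + C (352*(g:ℚ)^5 + 1440*(g:ℚ)^4 + 1448*(g:ℚ)^3 + 120*(g:ℚ)^2) * (a3'^2)

/-- The ideal `I(g) = (r₁, r₂, r₃, r₄)`. -/
def Ig (g : ℤ) : Ideal R3 := Ideal.span {r1 g, r2 g, r3 g, r4 g}

/-- The quotient map `R → Q(g) = R/I(g)`, as a `ℚ`-linear map. -/
def Qmk (g : ℤ) : R3 →ₗ[ℚ] R3 ⧸ Ig g := (Ideal.Quotient.mkₐ ℚ (Ig g)).toLinearMap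

/-- `Q(g)_i`: the image in `Q(g)` of the weighted-degree-`i` homogeneous polynomials. -/
def QComp (g : ℤ) (i : ℕ) : Submodule ℚ (R3 ⧸ Ig g) :=
  (weightedHomogeneousSubmodule ℚ wt i).map (Qmk g)

/-! For `g > 0` the relations `r₁, r₂, r₃` already kill every monomial of weight five other than
`a₂′⁵`. Eliminating `a₁³a₂′` between `r₁, r₂` and `a₁²a₂′²` between `r₂, r₃` gives two relations
of weight four; multiplied by the variables they form a linear system on the weight-five monomials
divisible by `a₃′` with nonzero determinant, and the monomials free of `a₃′` then follow from
`r₁, r₂, r₃`. Multiplying `r₄` by `a₃′` gives `a₃′³ = 0`, and every other monomial of weight at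
least five is a multiple of one of these. The evaluation `a₁, a₂′, a₃′ ↦ 0, 1, 0` kills `I(g)`
but not `a₂′^i`. -/

theorem eq_zero_of_intCast_mul_eq_zero {S : Type*} [Ring S] [Algebra ℚ S] {n : ℤ} (hn : n ≠ 0)
    {v : S} (h : (n : S) * v = 0) : v = 0 := by
  have hu : IsUnit (n : S) := by
    simpa using (isUnit_iff_ne_zero.mpr (Int.cast_ne_zero.mpr hn)).map (algebraMap ℚ S)
  exact hu.mul_right_eq_zero.mp h

section Relations

variable {g : ℤ}

local notation "Q" => R3 ⧸ Ig g
local notation "γ" => (g : R3 ⧸ Ig g)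
local notation "𝐱" => Ideal.Quotient.mk (Ig g) a1
local notation "𝐲" => Ideal.Quotient.mk (Ig g) a2'
local notation "𝐳" => Ideal.Quotient.mk (Ig g) a3'

lemma mk_eq_zero_of_mem_generators {r : R3} (hr : r ∈ ({r1 g, r2 g, r3 g, r4 g} : Set R3)) :
    Ideal.Quotient.mk (Ig g) r = 0 :=
  Ideal.Quotient.eq_zero_iff_mem.mpr (Ideal.subset_span hr)

lemma mk_r1 : (g * (g + 2) * (2 * g + 5) : Q) * 𝐱 ^ 3 = 8 * (g ^ 2 + 3 * g + 1) * (𝐱 * 𝐳) := by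
  have h := mk_eq_zero_of_mem_generators (g := g) (r := r1 g) (by simp)
  simp only [r1, map_sub, map_mul, map_pow, ← MvPolynomial.algebraMap_eq, map_add, map_ofNat,
    map_intCast] at h
  linear_combination h

lemma mk_r2 : (6 * g * (g + 2) * (2 * g + 3) : Q) * (𝐱 ^ 2 * 𝐲) =
    11 * (g + 2) * (g + 3) * (2 * g + 1) * (𝐱 * 𝐳) + 24 * g * (g + 1) * (𝐲 * 𝐳) := by
  have h := mk_eq_zero_of_mem_generators (g := g) (r := r2 g) (by simp)
  simp only [r2, map_sub, map_mul, map_pow, ← MvPolynomial.algebraMap_eq, map_add, map_ofNat,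
    map_intCast] at h
  linear_combination h

lemma mk_r3 : (216 * g * (g + 2) * (2 * g + 3) : Q) * (𝐱 * 𝐲 ^ 2) =
    (1450 * g ^ 3 + 8001 * g ^ 2 + 13115 * g + 5442) * (𝐱 * 𝐳)
      + 24 * g * (66 * g ^ 2 + 231 * g + 164) * (𝐲 * 𝐳) := by
  have h := mk_eq_zero_of_mem_generators (g := g) (r := r3 g) (by simp)
  simp only [r3, map_sub, map_mul, map_pow, ← MvPolynomial.algebraMap_eq, map_add, map_ofNat,
    map_intCast] at h
  linear_combination h

lemma mk_r4 : (14344 * g ^ 6 + 165692 * g ^ 5 + 747682 * g ^ 4 + 1636869 * g ^ 3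
      + 1719009 * g ^ 2 + 677844 * g - 540 : Q) * (𝐱 ^ 2 * 𝐳)
      + 8 * g ^ 2 * (44 * g ^ 3 + 180 * g ^ 2 + 181 * g + 15) * 𝐳 ^ 2 =
    8640 * g * (g + 1) * (g + 3) * (2 * g + 5) * (𝐲 ^ 2 * 𝐳) := by
  have h := mk_eq_zero_of_mem_generators (g := g) (r := r4 g) (by simp)
  simp only [r4, map_sub, map_add, map_mul, map_pow, ← MvPolynomial.algebraMap_eq, map_ofNat,
    map_intCast] at h
  linear_combination h

lemma weight_four_rel_of_r1_r2 (hg : 0 < g) :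
    (11 * (2 * g + 5) : Q) * (𝐱 ^ 2 * 𝐳) = 24 * (𝐱 * 𝐲 * 𝐳) := by
  rw [← sub_eq_zero]
  refine eq_zero_of_intCast_mul_eq_zero (n := (g + 2) * (g + 3) * (2 * g + 1))
    (by positivity) ?_
  push_cast
  linear_combination (6 * (2 * γ + 3) * 𝐲) * mk_r1 - ((2 * γ + 5) * 𝐱) * mk_r2

lemma weight_four_rel_of_r2_r3 :
    (1450 * g ^ 3 + 8001 * g ^ 2 + 13115 * g + 5442 : Q) * (𝐱 ^ 2 * 𝐳)
      + 12 * (66 * g ^ 3 + 99 * g ^ 2 - 233 * g - 198) * (𝐱 * 𝐲 * 𝐳) =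
    864 * g * (g + 1) * (𝐲 ^ 2 * 𝐳) := by
  linear_combination 36 * 𝐲 * mk_r2 - 𝐱 * mk_r3

lemma weight_five_with_a3'_eq_zero (hg : 0 < g) :
    𝐱 ^ 3 * 𝐳 = 0 ∧ 𝐱 ^ 2 * 𝐲 * 𝐳 = 0 ∧ 𝐱 * 𝐲 ^ 2 * 𝐳 = 0 ∧ 𝐲 ^ 3 * 𝐳 = 0 ∧
      𝐱 * 𝐳 ^ 2 = 0 ∧ 𝐲 * 𝐳 ^ 2 = 0 := by
  have h₁ := weight_four_rel_of_r1_r2 hg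
  have h₂ := weight_four_rel_of_r2_r3 (g := g)
  -- `𝐱 * h₁`, `𝐲 * h₁` and `𝐱 * h₂` are three relations among `𝐱³𝐳, 𝐱²𝐲𝐳, 𝐱𝐲²𝐳` with determinant
  -- a nonzero multiple of `(g + 1)²(2g + 3)`.
  have hx3z : 𝐱 ^ 3 * 𝐳 = 0 := by
    refine eq_zero_of_intCast_mul_eq_zero (n := (g + 1) ^ 2 * (2 * g + 3)) (by positivity) ?_
    push_cast
    linear_combination 36 * γ * (γ + 1) * 𝐲 * h₁ + (66 * γ ^ 2 + 199 * γ + 99) * 𝐱 * h₁ - 𝐱 * h₂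
  have hx2yz : 𝐱 ^ 2 * 𝐲 * 𝐳 = 0 := by
    refine eq_zero_of_intCast_mul_eq_zero (n := 24) (by norm_num) ?_
    push_cast
    linear_combination (11 * (2 * γ + 5)) * hx3z - 𝐱 * h₁
  have hxy2z : 𝐱 * 𝐲 ^ 2 * 𝐳 = 0 := by
    refine eq_zero_of_intCast_mul_eq_zero (n := 24) (by norm_num) ?_
    push_cast
    linear_combination (11 * (2 * γ + 5)) * hx2yz - 𝐲 * h₁
  have hy3z : 𝐲 ^ 3 * 𝐳 = 0 := by
    refine eq_zero_of_intCast_mul_eq_zero (n := 864 * g * (g + 1)) (by positivity) ?_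
    push_cast
    linear_combination (1450 * γ ^ 3 + 8001 * γ ^ 2 + 13115 * γ + 5442) * hx2yz
      + (12 * (66 * γ ^ 3 + 99 * γ ^ 2 - 233 * γ - 198)) * hxy2z - 𝐲 * h₂
  have hxz2 : 𝐱 * 𝐳 ^ 2 = 0 := by
    refine eq_zero_of_intCast_mul_eq_zero (n := 8 * (g ^ 2 + 3 * g + 1)) (by positivity) ?_
    push_cast
    linear_combination (γ * (γ + 2) * (2 * γ + 5)) * hx3z - 𝐳 * mk_r1
  have hyz2 : 𝐲 * 𝐳 ^ 2 = 0 := by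
    refine eq_zero_of_intCast_mul_eq_zero (n := 24 * g * (g + 1)) (by positivity) ?_
    push_cast
    linear_combination (6 * γ * (γ + 2) * (2 * γ + 3)) * hx2yz
      - (11 * (γ + 2) * (γ + 3) * (2 * γ + 1)) * hxz2 - 𝐳 * mk_r2
  exact ⟨hx3z, hx2yz, hxy2z, hy3z, hxz2, hyz2⟩

lemma weight_five_without_a3'_eq_zero (hg : 0 < g) :
    𝐱 ^ 5 = 0 ∧ 𝐱 ^ 4 * 𝐲 = 0 ∧ 𝐱 ^ 3 * 𝐲 ^ 2 = 0 ∧ 𝐱 ^ 2 * 𝐲 ^ 3 = 0 ∧ 𝐱 * 𝐲 ^ 4 = 0 := by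
  obtain ⟨hx3z, hx2yz, hxy2z, hy3z, -, -⟩ := weight_five_with_a3'_eq_zero hg
  have hA₁ : (g * (g + 2) * (2 * g + 5) : ℤ) ≠ 0 := by positivity
  have hA₂ : (6 * g * (g + 2) * (2 * g + 3) : ℤ) ≠ 0 := by positivity
  refine ⟨eq_zero_of_intCast_mul_eq_zero hA₁ ?_, eq_zero_of_intCast_mul_eq_zero hA₁ ?_,
    eq_zero_of_intCast_mul_eq_zero hA₁ ?_, eq_zero_of_intCast_mul_eq_zero hA₂ ?_,
    eq_zero_of_intCast_mul_eq_zero (n := 216 * g * (g + 2) * (2 * g + 3)) (by positivity) ?_⟩ <;>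
    push_cast
  · linear_combination 𝐱 ^ 2 * mk_r1 + 8 * (γ ^ 2 + 3 * γ + 1) * hx3z
  · linear_combination 𝐱 * 𝐲 * mk_r1 + 8 * (γ ^ 2 + 3 * γ + 1) * hx2yz
  · linear_combination 𝐲 ^ 2 * mk_r1 + 8 * (γ ^ 2 + 3 * γ + 1) * hxy2z
  · linear_combination 𝐲 ^ 2 * mk_r2 + 11 * (γ + 2) * (γ + 3) * (2 * γ + 1) * hxy2z
      + 24 * γ * (γ + 1) * hy3z
  · linear_combination 𝐲 ^ 2 * mk_r3 + (1450 * γ ^ 3 + 8001 * γ ^ 2 + 13115 * γ + 5442) * hxy2z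
      + 24 * γ * (66 * γ ^ 2 + 231 * γ + 164) * hy3z

lemma a3'_pow_three_eq_zero (hg : 0 < g) : 𝐳 ^ 3 = 0 := by
  obtain ⟨-, -, -, -, hxz2, hyz2⟩ := weight_five_with_a3'_eq_zero hg
  refine eq_zero_of_intCast_mul_eq_zero
    (n := 8 * g ^ 2 * (44 * g ^ 3 + 180 * g ^ 2 + 181 * g + 15)) (by positivity) ?_
  push_cast
  linear_combination 𝐳 * mk_r4 - (14344 * γ ^ 6 + 165692 * γ ^ 5 + 747682 * γ ^ 4
    + 1636869 * γ ^ 3 + 1719009 * γ ^ 2 + 677844 * γ - 540) * 𝐱 * hxz2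
    + 8640 * γ * (γ + 1) * (γ + 3) * (2 * γ + 5) * 𝐲 * hyz2

lemma mk_monomial_eq_zero_of_weight_eq_five (hg : 0 < g) {p q s : ℕ} (hw : p + q + 2 * s = 5)
    (hps : p + s ≠ 0) : 𝐱 ^ p * 𝐲 ^ q * 𝐳 ^ s = 0 := by
  obtain ⟨_, _, _, _, _, _⟩ := weight_five_with_a3'_eq_zero hg
  obtain ⟨_, _, _, _, _⟩ := weight_five_without_a3'_eq_zero hg
  obtain rfl : q = 5 - p - 2 * s := by omega
  have : s ≤ 2 := by omega
  have : p ≤ 5 := by omega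
  interval_cases s <;> interval_cases p <;> first | omega | simpa

lemma mk_monomial_eq_zero (hg : 0 < g) {p q s : ℕ} (hw : 5 ≤ p + q + 2 * s) (hps : p + s ≠ 0) :
    𝐱 ^ p * 𝐲 ^ q * 𝐳 ^ s = 0 := by
  induction hn : p + q + 2 * s using Nat.strong_induction_on generalizing p q s with
  | _ n ih =>
  obtain h5 | h6 : p + q + 2 * s = 5 ∨ 6 ≤ p + q + 2 * s := by omega
  · exact mk_monomial_eq_zero_of_weight_eq_five hg h5 hps
  rcases q with _ | q
  · rcases p with _ | _ | p
    · obtain ⟨s, rfl⟩ : ∃ t, s = t + 3 := ⟨s - 3, by omega⟩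
      rw [pow_add, a3'_pow_three_eq_zero hg, mul_zero, mul_zero]
    · obtain ⟨s, rfl⟩ : ∃ t, s = t + 1 := ⟨s - 1, by omega⟩
      calc 𝐱 ^ 1 * 𝐲 ^ 0 * 𝐳 ^ (s + 1) = 𝐳 * (𝐱 ^ 1 * 𝐲 ^ 0 * 𝐳 ^ s) := by ring
        _ = 0 := by rw [ih _ (by omega) (by omega) (by omega) rfl, mul_zero]
    · calc 𝐱 ^ (p + 2) * 𝐲 ^ 0 * 𝐳 ^ s = 𝐱 * (𝐱 ^ (p + 1) * 𝐲 ^ 0 * 𝐳 ^ s) := by ring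
        _ = 0 := by rw [ih _ (by omega) (by omega) (by omega) rfl, mul_zero]
  · calc 𝐱 ^ p * 𝐲 ^ (q + 1) * 𝐳 ^ s = 𝐲 * (𝐱 ^ p * 𝐲 ^ q * 𝐳 ^ s) := by ring
      _ = 0 := by rw [ih _ (by omega) (by omega) hps rfl, mul_zero]

end Relations

lemma weight_wt_apply (d : Fin 3 →₀ ℕ) : Finsupp.weight wt d = d 0 + d 1 + 2 * d 2 := by
  simp [Finsupp.weight_apply, Finsupp.sum_fintype, Fin.sum_univ_three, wt, mul_comm]

lemma monomial_eq_C_mul (d : Fin 3 →₀ ℕ) (c : ℚ) :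
    (monomial d c : R3) = C c * (a1 ^ d 0 * a2' ^ d 1 * a3' ^ d 2) := by
  rw [monomial_eq, Finsupp.prod_fintype _ _ (by simp), Fin.prod_univ_three, a1, a2', a3']

lemma a2'_pow_mem_weightedHomogeneousSubmodule (i : ℕ) :
    a2' ^ i ∈ weightedHomogeneousSubmodule ℚ wt i := by
  simpa [wt, a2'] using (isWeightedHomogeneous_X ℚ wt 1).pow i

lemma Qmk_mem_span_a2'_pow {g : ℤ} (hg : 0 < g) {i : ℕ} (hi : 5 ≤ i) {f : R3}
    (hf : f ∈ weightedHomogeneousSubmodule ℚ wt i) :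
    Qmk g f ∈ Submodule.span ℚ {Qmk g (a2' ^ i)} := by
  rw [mem_weightedHomogeneousSubmodule] at hf
  induction hf using IsWeightedHomogeneous.induction_on with
  | zero => simp
  | add p q _ _ hp hq => rw [map_add]; exact add_mem hp hq
  | monomial d r hd =>
    rw [weight_wt_apply] at hd
    rw [monomial_eq_C_mul, ← smul_eq_C_mul, map_smul]
    refine Submodule.smul_mem _ r ?_
    by_cases hd₀ : d 0 + d 2 = 0
    · obtain ⟨h₀, h₂⟩ : d 0 = 0 ∧ d 2 = 0 := by omega
      rw [h₀, h₂, show d 1 = i by omega, pow_zero, pow_zero, one_mul, mul_one]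
      exact Submodule.mem_span_singleton_self _
    · have h : Qmk g (a1 ^ d 0 * a2' ^ d 1 * a3' ^ d 2) = 0 := by
        simpa only [Qmk, AlgHom.toLinearMap_apply, map_mul, map_pow, Ideal.Quotient.mkₐ_eq_mk]
          using mk_monomial_eq_zero hg (by omega) hd₀
      rw [h]
      exact zero_mem _

lemma QComp_eq_span {g : ℤ} (hg : 0 < g) {i : ℕ} (hi : 5 ≤ i) :
    QComp g i = Submodule.span ℚ {Qmk g (a2' ^ i)} := by
  refine le_antisymm (Submodule.map_le_iff_le_comap.mpr fun f hf ↦ Qmk_mem_span_a2'_pow hg hi hf) ?_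
  rw [Submodule.span_le, Set.singleton_subset_iff]
  exact Submodule.mem_map_of_mem (a2'_pow_mem_weightedHomogeneousSubmodule i)

lemma Ig_le_ker_aeval (g : ℤ) : Ig g ≤ RingHom.ker (aeval ![0, 1, 0] : R3 →ₐ[ℚ] ℚ) := by
  rw [Ig, Ideal.span_le]
  rintro r (rfl | rfl | rfl | rfl) <;> simp [r1, r2, r3, r4, a1, a2', a3']

lemma Qmk_a2'_pow_ne_zero (g : ℤ) (i : ℕ) : Qmk g (a2' ^ i) ≠ 0 := by
  intro h
  have := Ig_le_ker_aeval g (Ideal.Quotient.eq_zero_iff_mem.mp h)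
  simp [a2'] at this

/-- For `i ≥ 5` and `g > 4i + 12`, the component `Q(g)_i` is one-dimensional,
spanned by the nonzero image of `a₂′^i`. -/
theorem QComp_high_degree (i : ℕ) (hi : 5 ≤ i) (g : ℤ) (hg : g > 4 * (i : ℤ) + 12) :
    Qmk g (a2'^i) ≠ 0 ∧
    QComp g i = Submodule.span ℚ {Qmk g (a2'^i)} ∧
    Module.finrank ℚ (QComp g i) = 1 := by
  have hspan := QComp_eq_span (g := g) (by omega) hi
  exact ⟨Qmk_a2'_pow_ne_zero g i, hspan, hspan ▸ finrank_span_singleton (Qmk_a2'_pow_ne_zero g i)⟩
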